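/- arXiv:2603.24447 — 2 statements merged into one kernel-verified Lean document; each statement's English description precedes it below -/
import Mathlib

section
/- Let σ be the antiholomorphic involution of ℙ¹(ℂ)×ℙ¹(ℂ) given by σ(x,y) = (ȳ, x̄). Let p, q, r, s be four σ-fixed points of ℙ¹(ℂ)×ℙ¹(ℂ) in general position. Then there exist A ∈ GL₂(ℂ) and λ ∈ ℂ∖ℝ such that the automorphism φ_A : (x,y) ↦ (A·x, Ā·y) maps p to ([1:0],[1:0]), q to ([0:1],[0:1]), r to ([1:1],[1:1]) and s to ([λ:1],[λ̄:1]). -/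
/-! The real points of the quadric are the pairs `(x, x̄)`, and `φ_A` acts on them through
`x ↦ A·x` alone, because `Ā·x̄` is the conjugate of `A·x`. So it suffices to send the first
components of `p, q, r` to `[1:0], [0:1], [1:1]` by a projectivity, which then sends that of `s`
to some `[λ:1]`. If `λ` were real, `φ_A` would map all four points onto the diagonal, so they
would lie on the `(1,1)`-curve `{(x, y) : A·x = Ā·y}`, contradicting general position. -/

noncomputable section

open ComplexConjugate

/-- The projective line `ℙ¹(K)` over a field `K`, i.e. the projectivization of `K²`. -/
abbrev Pone (K : Type) [Field K] : Type := Projectivization K (Fin 2 → K)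

theorem vec_ne_zero {K : Type} [Field K] {a b : K} (h : a ≠ 0 ∨ b ≠ 0) :
    (![a, b] : Fin 2 → K) ≠ 0 := by
  intro hv
  rcases h with h | h
  · exact h (by simpa using congrFun hv 0)
  · exact h (by simpa using congrFun hv 1)

/-- The point `[a : b]` of the projective line `ℙ¹(K)`. -/
def pt {K : Type} [Field K] (a b : K) (h : a ≠ 0 ∨ b ≠ 0) : Pone K :=
  Projectivization.mk K ![a, b] (vec_ne_zero h)

theorem mulVecLin_injective {K : Type} [Field K] (A : GL (Fin 2) K) :
    Function.Injective ⇑(Matrix.mulVecLin (A : Matrix (Fin 2) (Fin 2) K)) := by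
  intro v w hvw
  have h1 : (A : Matrix (Fin 2) (Fin 2) K).mulVec v
      = (A : Matrix (Fin 2) (Fin 2) K).mulVec w := hvw
  have h2 : ((↑(A⁻¹) : Matrix (Fin 2) (Fin 2) K) * (A : Matrix (Fin 2) (Fin 2) K)).mulVec v
      = ((↑(A⁻¹) : Matrix (Fin 2) (Fin 2) K) * (A : Matrix (Fin 2) (Fin 2) K)).mulVec w := by
    rw [← Matrix.mulVec_mulVec, ← Matrix.mulVec_mulVec, h1]
  rw [Units.inv_mul, Matrix.one_mulVec, Matrix.one_mulVec] at h2
  exact h2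

/-- The action of `A ∈ GL₂(K)` on the projective line `ℙ¹(K)`: `A·[v] = [A v]`. -/
def glMap {K : Type} [Field K] (A : GL (Fin 2) K) : Pone K → Pone K :=
  Projectivization.map (Matrix.mulVecLin (A : Matrix (Fin 2) (Fin 2) K)) (mulVecLin_injective A)

/-- Coordinatewise complex conjugation on `ℙ¹(ℂ)`: `[a : b] ↦ [ā : b̄]`. -/
def conjP1 (x : Pone ℂ) : Pone ℂ :=
  Projectivization.mk ℂ (fun i => conj (x.rep i)) (by
    intro hc
    apply x.rep_nonzero
    funext i
    have h2 : conj (x.rep i) = 0 := congrFun hc i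
    simpa using h2)

/-- Entrywise complex conjugation `A ↦ Ā` on `GL₂(ℂ)`. -/
def conjGL (A : GL (Fin 2) ℂ) : GL (Fin 2) ℂ :=
  Units.map (RingHom.toMonoidHom
    ((starRingEnd ℂ).mapMatrix : Matrix (Fin 2) (Fin 2) ℂ →+* Matrix (Fin 2) (Fin 2) ℂ)) A

/-- Four points of `ℙ¹(K) × ℙ¹(K)` are in general position: their images under the first
projection are pairwise distinct, their images under the second projection are pairwise
distinct, and there is no nonzero bilinear form
`c₀₀u₀v₀ + c₀₁u₀v₁ + c₁₀u₁v₀ + c₁₁u₁v₁` vanishing at all four points (i.e. no curve of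
bidegree `(1,1)` through all four points). -/
def GenPos {K : Type} [Field K] (P₁ P₂ P₃ P₄ : Pone K × Pone K) : Prop :=
  [P₁.1, P₂.1, P₃.1, P₄.1].Pairwise (· ≠ ·) ∧
  [P₁.2, P₂.2, P₃.2, P₄.2].Pairwise (· ≠ ·) ∧
  ∀ c₀₀ c₀₁ c₁₀ c₁₁ : K,
    (∀ P ∈ [P₁, P₂, P₃, P₄],
      c₀₀ * P.1.rep 0 * P.2.rep 0 + c₀₁ * P.1.rep 0 * P.2.rep 1 +
        c₁₀ * P.1.rep 1 * P.2.rep 0 + c₁₁ * P.1.rep 1 * P.2.rep 1 = 0) →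
    c₀₀ = 0 ∧ c₀₁ = 0 ∧ c₁₀ = 0 ∧ c₁₁ = 0

/-- The antiholomorphic involution `σ(x, y) = (ȳ, x̄)` of `ℙ¹(ℂ) × ℙ¹(ℂ)` (the real structure
of the quadric `Q_{3,1}`). -/
def sigmaQ (P : Pone ℂ × Pone ℂ) : Pone ℂ × Pone ℂ := (conjP1 P.2, conjP1 P.1)

/-- The automorphism `φ_A : (x, y) ↦ (A·x, Ā·y)` of `ℙ¹(ℂ) × ℙ¹(ℂ)`. -/
def phiA (A : GL (Fin 2) ℂ) (P : Pone ℂ × Pone ℂ) : Pone ℂ × Pone ℂ :=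
  (glMap A P.1, glMap (conjGL A) P.2)

open Projectivization Matrix

section ProjectiveLine

variable {K : Type} [Field K]

def wedge (v w : Fin 2 → K) : K := v 0 * w 1 - v 1 * w 0

theorem mk_eq_mk_iff_wedge_eq_zero {v w : Fin 2 → K} (hv : v ≠ 0) (hw : w ≠ 0) :
    mk K v hv = mk K w hw ↔ wedge v w = 0 := by
  rw [← not_iff_not, ← ne_eq, ← independent_pair_iff_ne, independent_mk_iff_LinearIndependent,
    ← Matrix.of_row ![v, w], Matrix.linearIndependent_rows_iff_isUnit,
    Matrix.isUnit_iff_isUnit_det, isUnit_iff_ne_zero, Matrix.det_fin_two]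
  simp [wedge]

theorem wedge_rep_ne_zero {x y : Pone K} (h : x ≠ y) : wedge x.rep y.rep ≠ 0 := by
  rwa [ne_eq, ← mk_eq_mk_iff_wedge_eq_zero x.rep_nonzero y.rep_nonzero, mk_rep, mk_rep]

theorem eq_pt_iff (x : Pone K) (a b : K) (h : a ≠ 0 ∨ b ≠ 0) :
    x = pt a b h ↔ x.rep 0 * b = x.rep 1 * a := by
  conv_lhs => rw [← mk_rep x]
  rw [pt, mk_eq_mk_iff_wedge_eq_zero, wedge, sub_eq_zero]
  simp

theorem exists_eq_pt_one_of_ne {x : Pone K} (hx : x ≠ pt 1 0 (Or.inl one_ne_zero)) :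
    ∃ a : K, x = pt a 1 (Or.inr one_ne_zero) := by
  have h1 : x.rep 1 ≠ 0 := fun h => hx <| by simp [eq_pt_iff, h]
  exact ⟨x.rep 0 / x.rep 1, by rw [eq_pt_iff]; field_simp⟩

theorem glMap_mk (A : GL (Fin 2) K) (v : Fin 2 → K) (hv : v ≠ 0) :
    glMap A (mk K v hv) = mk K ((A : Matrix (Fin 2) (Fin 2) K) *ᵥ v)
      (fun h => hv (mulVecLin_injective A (by simp [h]))) :=
  rfl

theorem glMap_eq_mk_mulVec_rep (A : GL (Fin 2) K) (x : Pone K) :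
    glMap A x = mk K ((A : Matrix (Fin 2) (Fin 2) K) *ᵥ x.rep)
      (fun h => x.rep_nonzero (mulVecLin_injective A (by simp [h]))) := by
  conv_lhs => rw [← mk_rep x]
  exact glMap_mk A _ _

theorem glMap_injective (A : GL (Fin 2) K) : Function.Injective (glMap A) :=
  map_injective _ _

theorem glMap_eq_pt_iff (A : GL (Fin 2) K) (x : Pone K) (a b : K) (h : a ≠ 0 ∨ b ≠ 0) :
    glMap A x = pt a b h ↔
      ((A : Matrix (Fin 2) (Fin 2) K) *ᵥ x.rep) 0 * b =
        ((A : Matrix (Fin 2) (Fin 2) K) *ᵥ x.rep) 1 * a := by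
  rw [glMap_eq_mk_mulVec_rep, pt, mk_eq_mk_iff_wedge_eq_zero, wedge, sub_eq_zero]
  simp

theorem glMap_eq_glMap_iff (A B : GL (Fin 2) K) (x y : Pone K) :
    glMap A x = glMap B y ↔
      wedge ((A : Matrix (Fin 2) (Fin 2) K) *ᵥ x.rep)
        ((B : Matrix (Fin 2) (Fin 2) K) *ᵥ y.rep) = 0 := by
  rw [glMap_eq_mk_mulVec_rep, glMap_eq_mk_mulVec_rep, mk_eq_mk_iff_wedge_eq_zero]

theorem exists_glMap_standardFrame {x y z : Pone K} (hxy : x ≠ y) (hxz : x ≠ z) (hyz : y ≠ z) :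
    ∃ A : GL (Fin 2) K, glMap A x = pt 1 0 (Or.inl one_ne_zero) ∧
      glMap A y = pt 0 1 (Or.inr one_ne_zero) ∧ glMap A z = pt 1 1 (Or.inl one_ne_zero) := by
  let u := x.rep
  let v := y.rep
  let w := z.rep
  -- The rows are the linear forms vanishing at `y` and at `x`, scaled to agree at `z`.
  let M : Matrix (Fin 2) (Fin 2) K :=
    !![wedge w u * v 1, -(wedge w u * v 0); wedge w v * u 1, -(wedge w v * u 0)]
  have hM : ∀ t, M *ᵥ t = ![wedge w u * wedge t v, wedge w v * wedge t u] := by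
    intro t
    ext i
    fin_cases i <;>
      simp only [M, mulVec, dotProduct, Fin.sum_univ_two, of_apply, cons_val', cons_val_fin_one,
        cons_val_zero, cons_val_one, Fin.zero_eta, Fin.mk_one, wedge] <;> ring
  have hdet : M.det = wedge w u * wedge w v * wedge v u := by
    rw [det_fin_two_of]; unfold wedge; ring
  have hM_ne : M.det ≠ 0 := by
    rw [hdet]
    exact mul_ne_zero (mul_ne_zero (wedge_rep_ne_zero hxz.symm) (wedge_rep_ne_zero hyz.symm))
      (wedge_rep_ne_zero hxy.symm)
  have hcoe : ((GeneralLinearGroup.mkOfDetNeZero M hM_ne : GL (Fin 2) K) :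
      Matrix (Fin 2) (Fin 2) K) = M := rfl
  refine ⟨.mkOfDetNeZero M hM_ne, ?_, ?_, ?_⟩ <;>
    rw [glMap_eq_pt_iff, hcoe, hM] <;> simp only [cons_val_zero, cons_val_one, wedge] <;> ring

def wedgeCoeff (A B : Matrix (Fin 2) (Fin 2) K) (i j : Fin 2) : K :=
  A 0 i * B 1 j - A 1 i * B 0 j

theorem wedge_mulVec_mulVec (A B : Matrix (Fin 2) (Fin 2) K) (u v : Fin 2 → K) :
    wedge (A *ᵥ u) (B *ᵥ v) =
      wedgeCoeff A B 0 0 * u 0 * v 0 + wedgeCoeff A B 0 1 * u 0 * v 1 +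
        wedgeCoeff A B 1 0 * u 1 * v 0 + wedgeCoeff A B 1 1 * u 1 * v 1 := by
  simp only [wedge, wedgeCoeff, mulVec, dotProduct, Fin.sum_univ_two]; ring

theorem wedgeCoeff_det (A B : Matrix (Fin 2) (Fin 2) K) :
    wedgeCoeff A B 0 0 * wedgeCoeff A B 1 1 - wedgeCoeff A B 0 1 * wedgeCoeff A B 1 0 =
      A.det * B.det := by
  rw [det_fin_two, det_fin_two]; unfold wedgeCoeff; ring

theorem not_genPos_of_glMap_eq (A B : GL (Fin 2) K) {p q r s : Pone K × Pone K}
    (h : ∀ P ∈ [p, q, r, s], glMap A P.1 = glMap B P.2) : ¬ GenPos p q r s := by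
  rintro ⟨-, -, hform⟩
  obtain ⟨h00, h01, -, -⟩ := hform (wedgeCoeff A B 0 0) (wedgeCoeff A B 0 1) (wedgeCoeff A B 1 0)
    (wedgeCoeff A B 1 1) fun P hP => by
    rw [← wedge_mulVec_mulVec, ← glMap_eq_glMap_iff]
    exact h P hP
  apply mul_ne_zero A.det_ne_zero B.det_ne_zero
  rw [← wedgeCoeff_det, h00, h01]
  ring

end ProjectiveLine

theorem conjP1_mk (v : Fin 2 → ℂ) (hv : v ≠ 0) :
    conjP1 (mk ℂ v hv) =
      mk ℂ (fun i => conj (v i)) (fun h => hv (funext fun i => by simpa using congrFun h i)) := by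
  obtain ⟨a, ha⟩ := exists_smul_eq_mk_rep ℂ v hv
  rw [conjP1, mk_eq_mk_iff]
  refine ⟨star a, funext fun i => ?_⟩
  simp [← ha, Units.smul_def]

theorem conjP1_pt (a b : ℂ) (h : a ≠ 0 ∨ b ≠ 0) :
    conjP1 (pt a b h) = pt (conj a) (conj b) (by simpa using h) := by
  rw [pt, conjP1_mk, pt]
  congr 1
  ext i
  fin_cases i <;> rfl

theorem glMap_conjGL_conjP1 (A : GL (Fin 2) ℂ) (x : Pone ℂ) :
    glMap (conjGL A) (conjP1 x) = conjP1 (glMap A x) := by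
  induction x using Projectivization.ind with
  | h v hv =>
    rw [conjP1_mk, glMap_mk, glMap_mk, conjP1_mk]
    congr 1
    funext i
    exact (RingHom.map_mulVec _ _ _ i).symm

theorem phiA_of_sigmaQ_eq_self (A : GL (Fin 2) ℂ) {P : Pone ℂ × Pone ℂ} (hP : sigmaQ P = P) :
    phiA A P = (glMap A P.1, conjP1 (glMap A P.1)) := by
  rw [phiA, ← glMap_conjGL_conjP1, ← congrArg Prod.snd hP]
  rfl

/-- Let `p, q, r, s` be four `σ`-fixed points of `ℙ¹(ℂ) × ℙ¹(ℂ)` in general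
position. Then there are `A ∈ GL₂(ℂ)` and `λ ∈ ℂ ∖ ℝ` such that `φ_A : (x,y) ↦ (A·x, Ā·y)`
maps `p` to `([1:0],[1:0])`, `q` to `([0:1],[0:1])`, `r` to `([1:1],[1:1])` and `s` to
`([λ:1],[λ̄:1])`. -/
theorem statement2 (p q r s : Pone ℂ × Pone ℂ)
    (hp : sigmaQ p = p) (hq : sigmaQ q = q) (hr : sigmaQ r = r) (hs : sigmaQ s = s)
    (hgen : GenPos p q r s) :
    ∃ (A : GL (Fin 2) ℂ) (lam : ℂ), lam.im ≠ 0 ∧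
      phiA A p = (pt 1 0 (Or.inl one_ne_zero), pt 1 0 (Or.inl one_ne_zero)) ∧
      phiA A q = (pt 0 1 (Or.inr one_ne_zero), pt 0 1 (Or.inr one_ne_zero)) ∧
      phiA A r = (pt 1 1 (Or.inl one_ne_zero), pt 1 1 (Or.inl one_ne_zero)) ∧
      phiA A s = (pt lam 1 (Or.inr one_ne_zero), pt (conj lam) 1 (Or.inr one_ne_zero)) := by
  obtain ⟨⟨hpq, hpr, hps⟩, ⟨hqr, -⟩, -⟩ :
      (p.1 ≠ q.1 ∧ p.1 ≠ r.1 ∧ p.1 ≠ s.1) ∧ (q.1 ≠ r.1 ∧ _) ∧ _ := by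
    simpa using hgen.1
  obtain ⟨A, hAp, hAq, hAr⟩ := exists_glMap_standardFrame hpq hpr hqr
  obtain ⟨lam, hAs⟩ := exists_eq_pt_one_of_ne (hAp ▸ (glMap_injective A).ne hps.symm)
  have hφp : phiA A p = (pt 1 0 (Or.inl one_ne_zero), pt 1 0 (Or.inl one_ne_zero)) := by
    simp [phiA_of_sigmaQ_eq_self A hp, hAp, conjP1_pt]
  have hφq : phiA A q = (pt 0 1 (Or.inr one_ne_zero), pt 0 1 (Or.inr one_ne_zero)) := by
    simp [phiA_of_sigmaQ_eq_self A hq, hAq, conjP1_pt]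
  have hφr : phiA A r = (pt 1 1 (Or.inl one_ne_zero), pt 1 1 (Or.inl one_ne_zero)) := by
    simp [phiA_of_sigmaQ_eq_self A hr, hAr, conjP1_pt]
  have hφs :
      phiA A s = (pt lam 1 (Or.inr one_ne_zero), pt (conj lam) 1 (Or.inr one_ne_zero)) := by
    simp [phiA_of_sigmaQ_eq_self A hs, hAs, conjP1_pt]
  refine ⟨A, lam, fun him => not_genPos_of_glMap_eq A (conjGL A) ?_ hgen, hφp, hφq, hφr, hφs⟩
  rw [Complex.conj_eq_iff_im.2 him] at hφs
  have on_diagonal {P : Pone ℂ × Pone ℂ} {x : Pone ℂ} (h : phiA A P = (x, x)) :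
      glMap A P.1 = glMap (conjGL A) P.2 :=
    (congrArg Prod.fst h).trans (congrArg Prod.snd h).symm
  simpa using ⟨on_diagonal hφp, on_diagonal hφq, on_diagonal hφr, on_diagonal hφs⟩
end
end

section
/- Let μ ∈ ℂ with μ ∉ {0,1,−1}. There is no A ∈ GL₂(ℂ) such that the map (x,y) ↦ (A·x, Ā·y) on ℙ¹(ℂ)×ℙ¹(ℂ) fixes ([1:0],[1:0]) and ([0:1],[0:1]) and exchanges ([1:1],[μ:1]) with ([μ̄:1],[1:1]); indeed such an A would force μ² = 1. -/
noncomputable section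

open ComplexConjugate

/-- The point `[1 : 0]` of `ℙ¹(ℂ)`. -/
def P10 : Pone ℂ := pt 1 0 (Or.inl one_ne_zero)

/-- The point `[0 : 1]` of `ℙ¹(ℂ)`. -/
def P01 : Pone ℂ := pt 0 1 (Or.inr one_ne_zero)

/-- The point `[1 : 1]` of `ℙ¹(ℂ)`. -/
def P11 : Pone ℂ := pt 1 1 (Or.inl one_ne_zero)

/-- The point `[a : 1]` of `ℙ¹(ℂ)`. -/
def Pa (a : ℂ) : Pone ℂ := pt a 1 (Or.inr one_ne_zero)

/-! Fixing `[1:0]` and `[0:1]` forces `A = diag(α, δ)`, with `δ ≠ 0` since `A` is invertible.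
Then `A·[1:1] = [μ̄:1]` gives `α = μ̄ δ`, and `Ā·[μ:1] = [1:1]` gives `ᾱ μ = δ̄`, i.e. `α μ̄ = δ`.
Hence `δ μ̄² = δ`, so `μ² = 1`. -/

theorem Projectivization.mk_eq_mk_iff_mul_eq_mul {K : Type} [Field K] {v w : Fin 2 → K}
    (hv : v ≠ 0) (hw : w ≠ 0) : mk K v hv = mk K w hw ↔ v 0 * w 1 = v 1 * w 0 := by
  rw [mk_eq_mk_iff']
  constructor
  · rintro ⟨a, rfl⟩
    simp only [Pi.smul_apply, smul_eq_mul]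
    ring
  · intro hvw
    by_cases hw0 : w 0 = 0
    · have hw1 : w 1 ≠ 0 := fun hw1 => hw (funext fun i => by fin_cases i <;> assumption)
      have hv0 : v 0 = 0 := by simpa [hw0, hw1] using hvw
      refine ⟨v 1 / w 1, funext fun i => ?_⟩
      fin_cases i
      · simp [hw0, hv0]
      · simp [div_mul_cancel₀ _ hw1]
    · refine ⟨v 0 / w 0, funext fun i => ?_⟩
      fin_cases i
      · simp [div_mul_cancel₀ _ hw0]
      · simp [div_mul_eq_mul_div, div_eq_iff hw0, hvw]

theorem glMap_pt_eq_pt_iff {K : Type} [Field K] (A : GL (Fin 2) K) {a b c d : K}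
    (h : a ≠ 0 ∨ b ≠ 0) (h' : c ≠ 0 ∨ d ≠ 0) :
    glMap A (pt a b h) = pt c d h' ↔
      (A 0 0 * a + A 0 1 * b) * d = (A 1 0 * a + A 1 1 * b) * c := by
  simp only [glMap, pt, Projectivization.map_mk, Matrix.mulVecLin_apply,
    Projectivization.mk_eq_mk_iff_mul_eq_mul]
  simp [Matrix.mulVec, dotProduct]

theorem conjGL_apply (A : GL (Fin 2) ℂ) (i j : Fin 2) : conjGL A i j = conj (A i j) := rfl

theorem sq_eq_one_of_phiA {μ : ℂ} {A : GL (Fin 2) ℂ}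
    (h₁ : phiA A (P10, P10) = (P10, P10)) (h₂ : phiA A (P01, P01) = (P01, P01))
    (h₃ : phiA A (P11, Pa μ) = (Pa (conj μ), P11)) : μ ^ 2 = 1 := by
  simp only [phiA, Prod.mk.injEq, P10, P01, P11, Pa, glMap_pt_eq_pt_iff] at h₁ h₂ h₃
  have hA10 : A 1 0 = 0 := by simpa [eq_comm] using h₁.1
  have hA01 : A 0 1 = 0 := by simpa using h₂.1
  have hA00 : A 0 0 = A 1 1 * conj μ := by simpa [hA10, hA01] using h₃.1
  have hA00' : conj (A 0 0) * μ = conj (A 1 1) := by simpa [conjGL_apply, hA10, hA01] using h₃.2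
  have hA11 : A 1 1 ≠ 0 := fun h => A.det_ne_zero (by rw [Matrix.det_fin_two, hA10, h]; ring)
  have hconj : A 1 1 * conj μ ^ 2 = A 1 1 := by
    have := congrArg conj hA00'
    simp only [map_mul, Complex.conj_conj] at this
    linear_combination this - conj μ * hA00
  have : conj μ ^ 2 = 1 := mul_left_cancel₀ hA11 (by rw [hconj, mul_one])
  simpa using congrArg conj this

theorem statement6_general (μ : ℂ) (h1 : μ ≠ 1) (h2 : μ ≠ -1) :
    (∀ A : GL (Fin 2) ℂ,
        phiA A (P10, P10) = (P10, P10) →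
        phiA A (P01, P01) = (P01, P01) →
        phiA A (P11, Pa μ) = (Pa (conj μ), P11) →
        phiA A (Pa (conj μ), P11) = (P11, Pa μ) →
        μ ^ 2 = 1) ∧
    ¬∃ A : GL (Fin 2) ℂ,
        phiA A (P10, P10) = (P10, P10) ∧
        phiA A (P01, P01) = (P01, P01) ∧
        phiA A (P11, Pa μ) = (Pa (conj μ), P11) ∧
        phiA A (Pa (conj μ), P11) = (P11, Pa μ) := by
  refine ⟨fun A h₁ h₂ h₃ _ => sq_eq_one_of_phiA h₁ h₂ h₃, ?_⟩
  rintro ⟨A, h₁, h₂, h₃, -⟩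
  rcases sq_eq_one_iff.1 (sq_eq_one_of_phiA h₁ h₂ h₃) with rfl | rfl
  exacts [h1 rfl, h2 rfl]

/-- Let `μ ∈ ℂ ∖ {0, 1, −1}`. There is no `A ∈ GL₂(ℂ)` such that the map
`(x,y) ↦ (A·x, Ā·y)` fixes `([1:0],[1:0])` and `([0:1],[0:1])` and exchanges
`([1:1],[μ:1])` with `([μ̄:1],[1:1])`; indeed such an `A` would force `μ² = 1`. -/
theorem statement6 (μ : ℂ) (h0 : μ ≠ 0) (h1 : μ ≠ 1) (h2 : μ ≠ -1) :
    (∀ A : GL (Fin 2) ℂ,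
        phiA A (P10, P10) = (P10, P10) →
        phiA A (P01, P01) = (P01, P01) →
        phiA A (P11, Pa μ) = (Pa (conj μ), P11) →
        phiA A (Pa (conj μ), P11) = (P11, Pa μ) →
        μ ^ 2 = 1) ∧
    ¬∃ A : GL (Fin 2) ℂ,
        phiA A (P10, P10) = (P10, P10) ∧
        phiA A (P01, P01) = (P01, P01) ∧
        phiA A (P11, Pa μ) = (Pa (conj μ), P11) ∧
        phiA A (Pa (conj μ), P11) = (P11, Pa μ) :=
  statement6_general μ h1 h2
end
end
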